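/- Fix m > 0, α > 0, 0 < R₁ < R₂ < R, P_T > 0, 𝒩 > 0, reflection coefficients 0 < ξ₂ ≤ ξ₁, κ = ξ₂/ξ₁, and a threshold γ ≥ 1. Let X₁ = g₁²·r₁^{−2α} and X₂ = g₂²·r₂^{−2α} be independent, where g₁, g₂ have Gamma density m^m·g^{m−1}·e^{−m·g}/Γ(m), r₁ has density 2r/(R₂² − R₁²) on [R₁, R₂] and r₂ has density 2r/(R² − R₂²) on [R₂, R]. Let Φ^A, φ^A be the CDF and density of X₁ and Φ^B, φ^B the CDF and density of X₂, and define p₂ = P( [ξ₁X₁ ≥ ξ₂X₂ and P_Tξ₁X₁ ≥ γ(P_Tξ₂X₂ + 𝒩) and P_Tξ₂X₂ ≥ γ𝒩] or [ξ₁X₁ < ξ₂X₂ and P_Tξ₂X₂ ≥ γ(P_Tξ₁X₁ + 𝒩) and P_Tξ₁X₁ ≥ γ𝒩] ). Then p₂ = ∫_{𝒩γ/(P_Tξ₂)}^{∞} (1 − Φ^A(γκx + 𝒩γ/(P_Tξ₁)))·φ^B(x) dx + ∫_{𝒩γ/(P_Tξ₁)}^{∞} (1 − Φ^B(γx/κ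 + 𝒩γ/(P_Tξ₂)))·φ^A(x) dx. -/

import Mathlib

open MeasureTheory Set Real

/-- The CDF `Φ(x) = P(g²·r^{−2α} < x)` of the composite variable, where `g` has Gamma
density `m^m g^{m−1} e^{−mg}/Γ(m)` on `(0,∞)` and `r` independently has density
`2r/(R_u² − R_l²)` on `[R_l, R_u]`, expressed as the double integral of the joint
density over the event. -/
noncomputable def compositeCDF (m α Rl Ru x : ℝ) : ℝ :=
  ∫ g in Set.Ioi (0 : ℝ), ∫ r in Rl..Ru,
    if g ^ 2 * r ^ (-(2 * α)) < x
    then m ^ m * g ^ (m - 1) * Real.exp (-m * g) / Real.Gamma m *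
      (2 * r / (Ru ^ 2 - Rl ^ 2)) else 0


namespace BackComAux

open MeasureTheory Set Real Filter Topology
open scoped ENNReal NNReal


noncomputable def gam (m g : ℝ) : ℝ :=
  m ^ m * g ^ (m - 1) * Real.exp (-m * g) / Real.Gamma m

noncomputable def rad (l u r : ℝ) : ℝ := 2 * r / (u ^ 2 - l ^ 2)

noncomputable def Xv (α : ℝ) (p : ℝ × ℝ) : ℝ := p.1 ^ 2 * p.2 ^ (-(2 * α))

noncomputable def μG (m : ℝ) : Measure ℝ :=
  (volume.restrict (Ioi (0:ℝ))).withDensity fun g => ((gam m g).toNNReal : ℝ≥0∞)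

noncomputable def μR (l u : ℝ) : Measure ℝ :=
  (volume.restrict (Ioc l u)).withDensity fun r => ((rad l u r).toNNReal : ℝ≥0∞)

noncomputable def ω (m l u : ℝ) : Measure (ℝ × ℝ) := (μG m).prod (μR l u)

noncomputable def ρ (m α l u : ℝ) : Measure ℝ := (ω m l u).map (Xv α)

lemma measurable_gam (m : ℝ) : Measurable (gam m) := by
  unfold gam
  exact (((measurable_const.mul (measurable_id.pow measurable_const)).mul
    ((measurable_id.const_mul (-m)).exp)).div measurable_const)

lemma measurable_rad (l u : ℝ) : Measurable (rad l u) := by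
  unfold rad
  exact (measurable_id.const_mul 2).div measurable_const

lemma measurable_Xv (α : ℝ) : Measurable (Xv α) := by
  unfold Xv
  exact (measurable_fst.pow measurable_const).mul (measurable_snd.pow measurable_const)

lemma gam_nonneg {m g : ℝ} (hm : 0 < m) (hg : 0 < g) : 0 ≤ gam m g := by
  unfold gam
  have h1 : 0 ≤ m ^ m := (Real.rpow_pos_of_pos hm m).le
  have h2 : 0 ≤ g ^ (m - 1) := (Real.rpow_pos_of_pos hg _).le
  have h3 : 0 < Real.Gamma m := Real.Gamma_pos_of_pos hm
  positivity

lemma rad_nonneg {l u r : ℝ} (h0 : 0 < l) (hlu : l < u) (hr : l < r) : 0 ≤ rad l u r := by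
  unfold rad
  have : 0 < u ^ 2 - l ^ 2 := by nlinarith
  have : 0 < r := h0.trans hr
  positivity

instance probG (m : ℝ) [Fact (0 < m)] : IsProbabilityMeasure (μG m) := by
  have hm : 0 < m := Fact.out
  constructor
  rw [μG, withDensity_apply _ MeasurableSet.univ, Measure.restrict_univ]
  have h1 : (∫⁻ g in Ioi (0:ℝ), ((gam m g).toNNReal : ℝ≥0∞))
      = ∫⁻ g in Ioi (0:ℝ), ProbabilityTheory.gammaPDF m m g := by
    refine setLIntegral_congr_fun measurableSet_Ioi (fun g hg => ?_)
    rw [ProbabilityTheory.gammaPDF_of_nonneg (le_of_lt hg)]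
    show ENNReal.ofReal (gam m g) = _
    congr 1
    unfold gam
    rw [neg_mul]
    ring
  rw [h1]
  have h2 : ∫⁻ g, ProbabilityTheory.gammaPDF m m g = 1 :=
    ProbabilityTheory.lintegral_gammaPDF_eq_one hm hm
  rw [← lintegral_add_compl (μ := volume) (ProbabilityTheory.gammaPDF m m)
    (measurableSet_Ioi (a := (0:ℝ)))] at h2
  have h3 : (∫⁻ g in (Ioi (0:ℝ))ᶜ, ProbabilityTheory.gammaPDF m m g) = 0 := by
    rw [compl_Ioi, ← Iio_union_right, lintegral_union (measurableSet_singleton 0)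
      (by simp only [Set.disjoint_left, mem_Iio, mem_singleton_iff]; exact fun a ha => ne_of_lt ha)]
    rw [setLIntegral_measure_zero _ _ (measure_singleton 0)]
    have : (∫⁻ g in Iio (0:ℝ), ProbabilityTheory.gammaPDF m m g) = 0 :=
      ProbabilityTheory.lintegral_gammaPDF_of_nonpos le_rfl
    simp [this]
  rw [h3, add_zero] at h2
  exact h2

instance probR (l u : ℝ) [Fact (0 < l)] [Fact (l < u)] : IsProbabilityMeasure (μR l u) := by
  have h0 : 0 < l := Fact.out
  have hlu : l < u := Fact.out
  constructor
  rw [μR, withDensity_apply _ MeasurableSet.univ, Measure.restrict_univ]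
  have hc : 0 < u ^ 2 - l ^ 2 := by nlinarith
  have hint : IntegrableOn (rad l u) (Ioc l u) := by
    apply Continuous.integrableOn_Ioc
    exact (continuous_const.mul continuous_id).div_const _
  have hnn : 0 ≤ᵐ[volume.restrict (Ioc l u)] rad l u :=
    (ae_restrict_iff' measurableSet_Ioc).mpr (ae_of_all _ fun r hr => rad_nonneg h0 hlu hr.1)
  have h1 : (∫⁻ r in Ioc l u, ((rad l u r).toNNReal : ℝ≥0∞))
      = ENNReal.ofReal (∫ r in Ioc l u, rad l u r) := by
    rw [ofReal_integral_eq_lintegral_ofReal hint hnn]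
    rfl
  rw [h1, ← intervalIntegral.integral_of_le hlu.le]
  have h2 : (∫ r in l..u, rad l u r) = 1 := by
    unfold rad
    simp_rw [div_eq_mul_inv]
    rw [intervalIntegral.integral_mul_const, intervalIntegral.integral_const_mul,
      integral_id]
    field_simp
  rw [h2]
  simp


lemma abs_ite_le_one (c : Prop) [Decidable c] : |(if c then (1:ℝ) else 0)| ≤ 1 := by
  split_ifs <;> norm_num

lemma nonneg_of_monotone_hasDerivAt {f : ℝ → ℝ} {c x : ℝ}
    (hf : Monotone f) (h : HasDerivAt f c x) : 0 ≤ c := by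
  have ht := hasDerivAt_iff_tendsto_slope.mp h
  refine ge_of_tendsto ht ?_
  filter_upwards [self_mem_nhdsWithin] with y hy
  have hy' : y ≠ x := hy
  rcases lt_or_gt_of_ne hy' with h1 | h1
  · rw [slope_def_field]
    refine div_nonneg_iff.mpr (Or.inr ⟨?_, by linarith⟩)
    have := hf h1.le
    linarith
  · rw [slope_def_field]
    refine div_nonneg ?_ (by linarith)
    have := hf h1.le
    linarith

lemma iInter_Iio_eq_Iic (a : ℝ) : (⋂ n : ℕ, Iio (a + 1 / (n + 1))) = Iic a := by
  ext x
  simp only [mem_iInter, mem_Iio, mem_Iic]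
  constructor
  · intro h
    by_contra hx
    push_neg at hx
    obtain ⟨n, hn⟩ := exists_nat_one_div_lt (sub_pos.2 hx)
    have := h n
    linarith
  · intro h n
    have : 0 < 1 / ((n : ℝ) + 1) := by positivity
    linarith

lemma iUnion_Ioc_eq_Ioc {a : ℝ} (_ : 0 < a) :
    (⋃ n : ℕ, Ioc (1 / ((n:ℝ) + 1)) a) = Ioc 0 a := by
  ext x
  simp only [mem_iUnion, mem_Ioc]
  constructor
  · rintro ⟨n, hn, hx⟩
    have : 0 < 1 / ((n : ℝ) + 1) := by positivity
    exact ⟨by linarith, hx⟩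
  · rintro ⟨hx0, hxa⟩
    obtain ⟨n, hn⟩ := exists_nat_one_div_lt hx0
    exact ⟨n, hn, hxa⟩

lemma measure_eq_withDensity (ρ' : Measure ℝ) [IsProbabilityMeasure ρ'] (F : ℝ → ℝ)
    (hF : ∀ c, F c = (ρ' (Iio c)).toReal) (hzero : ρ' (Iic (0:ℝ)) = 0)
    (φ : ℝ → ℝ) (hφ : ∀ x : ℝ, 0 < x → HasDerivAt F (φ x) x) :
    ρ' = volume.withDensity
      (fun x => ENNReal.ofReal ((Ioi (0:ℝ)).indicator (deriv F) x)) := by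
  set σ' : Measure ℝ := volume.withDensity
      (fun x => ENNReal.ofReal ((Ioi (0:ℝ)).indicator (deriv F) x)) with hσ'
  have hmono : Monotone F := fun a b hab => by
    rw [hF, hF]
    exact ENNReal.toReal_mono (measure_ne_top _ _)
      (measure_mono (Iio_subset_Iio hab))
  have hδ : ∀ x : ℝ, 0 < x → deriv F x = φ x := fun x hx => (hφ x hx).deriv
  have hδnn : ∀ x : ℝ, 0 < x → 0 ≤ deriv F x := fun x hx => by
    rw [hδ x hx]; exact nonneg_of_monotone_hasDerivAt hmono (hφ x hx)
  -- limits of F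
  have hF0 : Tendsto (fun n : ℕ => F (1 / (n + 1))) atTop (𝓝 0) := by
    have hanti : Antitone fun n : ℕ => Iio ((0:ℝ) + 1 / (n + 1)) := by
      intro i j hij
      refine Iio_subset_Iio (add_le_add_right ?_ _)
      apply one_div_le_one_div_of_le (by positivity)
      exact add_le_add_left (by exact_mod_cast hij) 1
    have ht := tendsto_measure_iInter_atTop (μ := ρ')
      (fun n => measurableSet_Iio.nullMeasurableSet) hanti ⟨0, measure_ne_top _ _⟩
    rw [iInter_Iio_eq_Iic 0, hzero] at ht
    have ht2 := (ENNReal.tendsto_toReal (by simp)).comp ht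
    simp only [ENNReal.toReal_zero] at ht2
    refine ht2.congr fun n => ?_
    simp only [Function.comp_apply, zero_add]
    exact (hF _).symm
  -- ρ' (Iic a) for 0 < a
  have hρIic : ∀ a : ℝ, 0 < a → ρ' (Iic a) = ENNReal.ofReal (F a) := by
    intro a ha
    have hanti : Antitone fun n : ℕ => Iio (a + 1 / (n + 1)) := by
      intro i j hij
      refine Iio_subset_Iio (add_le_add_right ?_ _)
      apply one_div_le_one_div_of_le (by positivity)
      exact add_le_add_left (by exact_mod_cast hij) 1
    have ht := tendsto_measure_iInter_atTop (μ := ρ')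
      (fun n => measurableSet_Iio.nullMeasurableSet) hanti ⟨0, measure_ne_top _ _⟩
    rw [iInter_Iio_eq_Iic a] at ht
    have hFc : ContinuousAt F a := (hφ a ha).continuousAt
    have h3 : Tendsto (fun n : ℕ => a + 1 / ((n:ℝ) + 1)) atTop (𝓝 a) := by
      have h : Tendsto (fun n : ℕ => 1 / ((n:ℝ) + 1)) atTop (𝓝 0) :=
        tendsto_one_div_add_atTop_nhds_zero_nat
      have := tendsto_const_nhds (x := a) (f := atTop (α := ℕ)).add h
      simpa using this
    have h4 : Tendsto (fun n : ℕ => F (a + 1 / (n + 1))) atTop (𝓝 (F a)) :=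
      (hFc.tendsto).comp h3
    have h5 := (ENNReal.continuous_ofReal.tendsto _).comp h4
    have ht2 : Tendsto (fun n : ℕ => ρ' (Iio (a + 1 / (n + 1)))) atTop
        (𝓝 (ENNReal.ofReal (F a))) := by
      refine h5.congr fun n => ?_
      simp only [Function.comp_apply]
      rw [hF, ENNReal.ofReal_toReal (measure_ne_top _ _)]
    exact tendsto_nhds_unique ht ht2
  -- σ' (Ioc ε a) for 0 < ε
  have hσIoc : ∀ ε a : ℝ, 0 < ε → σ' (Ioc ε a) = ENNReal.ofReal (F a - F ε) := by
    intro ε a hε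
    rcases le_or_gt a ε with hle | hlt
    · rw [Ioc_eq_empty (by exact not_lt.mpr hle), measure_empty]
      symm
      rw [ENNReal.ofReal_eq_zero]
      have := hmono hle
      linarith
    · rw [hσ', withDensity_apply _ measurableSet_Ioc]
      have hcongr : ∫⁻ x in Ioc ε a, ENNReal.ofReal ((Ioi (0:ℝ)).indicator (deriv F) x)
          = ∫⁻ x in Ioc ε a, ENNReal.ofReal (deriv F x) := by
        refine setLIntegral_congr_fun measurableSet_Ioc (fun x hx => ?_)
        rw [indicator_of_mem (by exact hε.trans hx.1 : x ∈ Ioi (0:ℝ))]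
      rw [hcongr]
      have hint : IntegrableOn (deriv F) (Ioc ε a) := by
        apply intervalIntegral.integrableOn_deriv_of_nonneg
        · exact fun x hx => ((hφ x (lt_of_lt_of_le hε hx.1)).continuousAt).continuousWithinAt
        · intro x hx
          have hx0 : 0 < x := hε.trans hx.1
          exact (hφ x hx0).deriv ▸ hφ x hx0
        · exact fun x hx => hδnn x (hε.trans hx.1)
      have hnn : 0 ≤ᵐ[volume.restrict (Ioc ε a)] deriv F :=
        (ae_restrict_iff' measurableSet_Ioc).mpr
          (ae_of_all _ fun x hx => hδnn x (hε.trans hx.1))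
      rw [← ofReal_integral_eq_lintegral_ofReal hint hnn]
      congr 1
      rw [← intervalIntegral.integral_of_le hlt.le]
      apply intervalIntegral.integral_eq_sub_of_hasDerivAt
      · intro x hx
        rw [uIcc_of_le hlt.le] at hx
        have hx0 : 0 < x := lt_of_lt_of_le hε hx.1
        exact (hφ x hx0).deriv ▸ hφ x hx0
      · exact (intervalIntegrable_iff_integrableOn_Ioc_of_le hlt.le).mpr hint
  -- σ' (Iic a) for a ≤ 0 is 0
  have hσIic0 : ∀ a : ℝ, a ≤ 0 → σ' (Iic a) = 0 := by
    intro a ha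
    rw [hσ', withDensity_apply _ measurableSet_Iic]
    have hz : ∀ x : ℝ, x ∈ Iic a →
        ENNReal.ofReal ((Ioi (0:ℝ)).indicator (deriv F) x) = (fun _ => (0:ℝ≥0∞)) x := by
      intro x hx
      have hxa : x ≤ a := hx
      rw [indicator_of_notMem (by simp only [mem_Ioi]; intro h; linarith : x ∉ Ioi (0:ℝ))]
      exact ENNReal.ofReal_zero
    rw [setLIntegral_congr_fun measurableSet_Iic hz, lintegral_zero]
  -- σ' (Iic a) for 0 < a
  have hσIic : ∀ a : ℝ, 0 < a → σ' (Iic a) = ENNReal.ofReal (F a) := by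
    intro a ha
    have hun : Iic (0:ℝ) ∪ Ioc 0 a = Iic a := Iic_union_Ioc_eq_Iic ha.le
    have hdisj : Disjoint (Iic (0:ℝ)) (Ioc 0 a) := by
      simp [Set.disjoint_left, mem_Iic, mem_Ioc]
      intro x hx h0x
      linarith
    rw [← hun, measure_union hdisj measurableSet_Ioc, hσIic0 0 le_rfl, zero_add]
    have hmon : Monotone fun n : ℕ => Ioc (1 / ((n:ℝ) + 1)) a := by
      intro i j hij
      apply Ioc_subset_Ioc_left
      apply one_div_le_one_div_of_le (by positivity)
      exact add_le_add_left (by exact_mod_cast hij) 1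
    have ht := tendsto_measure_iUnion_atTop (μ := σ') hmon
    rw [iUnion_Ioc_eq_Ioc ha] at ht
    have ht2 : Tendsto (fun n : ℕ => σ' (Ioc (1 / ((n:ℝ) + 1)) a)) atTop
        (𝓝 (ENNReal.ofReal (F a))) := by
      have h6 : Tendsto (fun n : ℕ => F a - F (1 / ((n:ℝ) + 1))) atTop (𝓝 (F a)) := by
        have := (tendsto_const_nhds (x := F a) (f := atTop (α := ℕ))).sub hF0
        simpa using this
      have h7 := (ENNReal.continuous_ofReal.tendsto _).comp h6
      refine h7.congr fun n => ?_
      simp only [Function.comp_apply]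
      exact (hσIoc _ a (by positivity)).symm
    exact tendsto_nhds_unique ht ht2
  -- conclude
  refine Measure.ext_of_Iic ρ' σ' fun a => ?_
  rcases le_or_gt a 0 with ha | ha
  · rw [hσIic0 a ha]
    exact measure_mono_null (Iic_subset_Iic.mpr ha) hzero
  · rw [hρIic a ha, hσIic a ha]


lemma integral_withDensity_ofReal {d : ℝ → ℝ} (hd : Measurable d)
    (hdnn : ∀ x, 0 ≤ d x) (u : ℝ → ℝ) :
    (∫ x, u x ∂(volume.withDensity fun x => ENNReal.ofReal (d x)))
      = ∫ x, d x * u x := by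
  have h1 : (fun x => ENNReal.ofReal (d x)) = fun x => ((d x).toNNReal : ℝ≥0∞) := rfl
  rw [h1, integral_withDensity_eq_integral_smul hd.real_toNNReal]
  congr 1
  funext x
  rw [NNReal.smul_def, Real.coe_toNNReal _ (hdnn x), smul_eq_mul]

lemma integrable_of_bdd_one {μ : Measure ℝ} [IsFiniteMeasure μ] {f : ℝ → ℝ}
    (hf : Measurable f) (h : ∀ x, |f x| ≤ 1) : Integrable f μ := by
  refine Integrable.mono' (integrable_const 1) hf.aestronglyMeasurable ?_
  exact ae_of_all _ fun x => by simpa [Real.norm_eq_abs] using h x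

lemma integral_ite_Ici {μ : Measure ℝ} [IsFiniteMeasure μ] (c : ℝ) :
    (∫ y, (if c ≤ y then (1:ℝ) else 0) ∂μ) = (μ (Ici c)).toReal := by
  have h : (fun y => if c ≤ y then (1:ℝ) else 0) = Set.indicator (Ici c) 1 := by
    funext y
    simp [Set.indicator_apply, mem_Ici]
  rw [h, integral_indicator_one measurableSet_Ici]
  rfl

lemma norm_integral_le_one {μ : Measure ℝ} [IsProbabilityMeasure μ] {f : ℝ → ℝ}
    (h : ∀ x, |f x| ≤ 1) : |∫ x, f x ∂μ| ≤ 1 := by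
  have := norm_integral_le_of_norm_le_const (μ := μ) (f := f) (C := 1)
    (ae_of_all _ fun x => by simpa [Real.norm_eq_abs] using h x)
  simpa [Real.norm_eq_abs] using this


section
variable {m α l u : ℝ}

lemma box_integral (hm : 0 < m) (h0 : 0 < l) (hlu : l < u)
    (k : ℝ → ℝ → ℝ) (hk : Measurable (Function.uncurry k)) (C : ℝ)
    (hbd : ∀ g r, |k g r| ≤ C) :
    (∫ g in Ioi (0:ℝ), ∫ r in l..u, gam m g * rad l u r * k g r)
      = ∫ p, k p.1 p.2 ∂(ω m l u) := by
  haveI : Fact (0 < m) := ⟨hm⟩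
  haveI : Fact (0 < l) := ⟨h0⟩
  haveI : Fact (l < u) := ⟨hlu⟩
  haveI : IsProbabilityMeasure (ω m l u) := by unfold ω; infer_instance
  have hint : Integrable (Function.uncurry k) (ω m l u) := by
    refine Integrable.mono' (integrable_const |C|) hk.aestronglyMeasurable ?_
    refine ae_of_all _ fun p => ?_
    simp only [Function.uncurry_apply_pair, Real.norm_eq_abs]
    exact (hbd p.1 p.2).trans (le_abs_self C)
  have hprod := integral_prod (μ := μG m) (ν := μR l u) _ hint
  simp only [Function.uncurry_apply_pair] at hprod
  have key : ∀ g ∈ Ioi (0:ℝ),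
      (∫ r in l..u, gam m g * rad l u r * k g r)
        = (gam m g).toNNReal • ∫ r, k g r ∂(μR l u) := by
    intro g hg
    rw [μR, integral_withDensity_eq_integral_smul ((measurable_rad l u).real_toNNReal)]
    rw [NNReal.smul_def, Real.coe_toNNReal _ (gam_nonneg hm hg), smul_eq_mul,
      ← integral_const_mul,
      intervalIntegral.integral_of_le hlu.le]
    refine setIntegral_congr_fun measurableSet_Ioc fun r hr => ?_
    rw [NNReal.smul_def, Real.coe_toNNReal _ (rad_nonneg h0 hlu hr.1), smul_eq_mul]
    ring
  calc (∫ g in Ioi (0:ℝ), ∫ r in l..u, gam m g * rad l u r * k g r)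
      = ∫ g in Ioi (0:ℝ), (gam m g).toNNReal • ∫ r, k g r ∂(μR l u) :=
        setIntegral_congr_fun measurableSet_Ioi key
    _ = ∫ g, (∫ r, k g r ∂(μR l u)) ∂(μG m) :=
        (integral_withDensity_eq_integral_smul ((measurable_gam m).real_toNNReal) _).symm
    _ = ∫ p, k p.1 p.2 ∂(ω m l u) := by rw [ω]; exact hprod.symm


lemma probω (hm : 0 < m) (h0 : 0 < l) (hlu : l < u) :
    IsProbabilityMeasure (ω m l u) := by
  haveI : Fact (0 < m) := ⟨hm⟩
  haveI : Fact (0 < l) := ⟨h0⟩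
  haveI : Fact (l < u) := ⟨hlu⟩
  unfold ω; infer_instance

lemma probρ (hm : 0 < m) (h0 : 0 < l) (hlu : l < u) :
    IsProbabilityMeasure (ρ m α l u) := by
  haveI := probω hm h0 hlu
  exact Measure.isProbabilityMeasure_map (measurable_Xv α).aemeasurable

lemma cdf_eq (hm : 0 < m) (h0 : 0 < l) (hlu : l < u) (c : ℝ) :
    compositeCDF m α l u c = (ρ m α l u (Iio c)).toReal := by
  have hS : MeasurableSet {p : ℝ × ℝ | Xv α p < c} :=
    measurableSet_lt (measurable_Xv α) measurable_const
  have h1 : compositeCDF m α l u c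
      = ∫ g in Ioi (0:ℝ), ∫ r in l..u,
          gam m g * rad l u r * (if Xv α (g, r) < c then 1 else 0) := by
    unfold compositeCDF
    refine setIntegral_congr_fun measurableSet_Ioi fun g _ => ?_
    refine intervalIntegral.integral_congr fun r _ => ?_
    by_cases h : g ^ 2 * r ^ (-(2 * α)) < c <;> simp [h, gam, rad, Xv]
  have hmeas : Measurable
      (Function.uncurry fun g r => if Xv α (g, r) < c then (1:ℝ) else 0) := by
    have he : (Function.uncurry fun g r => if Xv α (g, r) < c then (1:ℝ) else 0)
        = fun p : ℝ × ℝ => if Xv α p < c then (1:ℝ) else 0 := rfl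
    rw [he]
    exact Measurable.ite hS measurable_const measurable_const
  rw [h1, box_integral hm h0 hlu _ hmeas 1
    (fun g r => by by_cases h : Xv α (g, r) < c <;> simp [h])]
  have h2 : (fun p : ℝ × ℝ => if Xv α (p.1, p.2) < c then (1:ℝ) else 0)
      = Set.indicator {p : ℝ × ℝ | Xv α p < c} 1 := by
    funext p
    simp [Set.indicator_apply, mem_setOf_eq]
  rw [show (∫ p : ℝ × ℝ, (if Xv α (p.1, p.2) < c then (1:ℝ) else 0) ∂(ω m l u))
      = ∫ p, Set.indicator {p : ℝ × ℝ | Xv α p < c} 1 p ∂(ω m l u) from by rw [← h2],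
    integral_indicator_one hS, ρ, Measure.map_apply (measurable_Xv α) measurableSet_Iio]
  rfl

lemma omega_compl_box (hm : 0 < m) (h0 : 0 < l) (hlu : l < u) :
    ω m l u ((Ioi (0:ℝ) ×ˢ Ioc l u)ᶜ) = 0 := by
  haveI : Fact (0 < m) := ⟨hm⟩
  haveI : Fact (0 < l) := ⟨h0⟩
  haveI : Fact (l < u) := ⟨hlu⟩
  have h1 : μG m ((Ioi (0:ℝ))ᶜ) = 0 := by
    rw [μG, withDensity_apply _ measurableSet_Ioi.compl,
      Measure.restrict_restrict measurableSet_Ioi.compl, compl_inter_self,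
      Measure.restrict_empty, lintegral_zero_measure]
  have h2 : μR l u ((Ioc l u)ᶜ) = 0 := by
    rw [μR, withDensity_apply _ measurableSet_Ioc.compl,
      Measure.restrict_restrict measurableSet_Ioc.compl, compl_inter_self,
      Measure.restrict_empty, lintegral_zero_measure]
  rw [compl_prod_eq_union]
  refine le_antisymm ?_ zero_le
  refine le_trans (measure_union_le _ _) ?_
  rw [ω, Measure.prod_prod, Measure.prod_prod, h1, h2]
  simp

lemma rho_Iic_zero (hm : 0 < m) (hα : 0 < α) (h0 : 0 < l) (hlu : l < u) :
    ρ m α l u (Iic (0:ℝ)) = 0 := by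
  rw [ρ, Measure.map_apply (measurable_Xv α) measurableSet_Iic]
  refine measure_mono_null ?_ (omega_compl_box hm h0 hlu)
  intro p hp
  simp only [mem_preimage, mem_Iic] at hp
  rw [mem_compl_iff]
  rintro ⟨hg, hr1, -⟩
  have hXp : 0 < Xv α p := by
    have hp2 : (0:ℝ) < p.2 := h0.trans hr1
    exact mul_pos (pow_pos hg 2) (Real.rpow_pos_of_pos hp2 _)
  linarith


lemma tail_eq (hm : 0 < m) (h0 : 0 < l) (hlu : l < u) (c : ℝ) :
    (ρ m α l u (Ici c)).toReal = 1 - compositeCDF m α l u c := by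
  haveI := probρ (m := m) (α := α) hm h0 hlu
  rw [show Ici c = (Iio c)ᶜ from (compl_Iio).symm,
    measure_compl measurableSet_Iio (measure_ne_top _ _), measure_univ,
    ENNReal.toReal_sub_of_le prob_le_one (by simp), ENNReal.toReal_one,
    cdf_eq hm h0 hlu c]


end

end BackComAux

set_option maxHeartbeats 2000000 in
open BackComAux in
/-- Region division with Nakagami-m fading, `γ ≥ 1`. With
`X₁ = g₁²·r₁^{−2α}` (near node: `r₁` on `[R₁,R₂]`) and `X₂ = g₂²·r₂^{−2α}` (far node:
`r₂` on `[R₂,R]`) independent, `Φ^A, φ^A` the CDF and density of `X₁` and `Φ^B, φ^B`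
those of `X₂`, the probability `p₂` that both paired nodes are successfully decoded
(decoding the instantaneously stronger signal first) equals
`∫_{𝒩γ/(P_Tξ₂)}^{∞} (1 − Φ^A(γκx + 𝒩γ/(P_Tξ₁))) φ^B(x) dx
 + ∫_{𝒩γ/(P_Tξ₁)}^{∞} (1 − Φ^B(γx/κ + 𝒩γ/(P_Tξ₂))) φ^A(x) dx`.
`p₂` is expressed as the quadruple integral of the joint density of
`(g₁, r₁, g₂, r₂)` over the success event. -/
theorem backcom_fading_region_division_p2
    (m α R₁ R₂ R PT Noise γ ξ₁ ξ₂ κ : ℝ)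
    (hm : 0 < m) (hα : 0 < α) (h0 : 0 < R₁) (h12 : R₁ < R₂) (h2R : R₂ < R)
    (hPT : 0 < PT) (hNoise : 0 < Noise) (hγ : 1 ≤ γ)
    (hξ2 : 0 < ξ₂) (hξ21 : ξ₂ ≤ ξ₁) (hκ : κ = ξ₂ / ξ₁)
    (φA φB : ℝ → ℝ)
    (hφA : ∀ x : ℝ, 0 < x → HasDerivAt (compositeCDF m α R₁ R₂) (φA x) x)
    (hφB : ∀ x : ℝ, 0 < x → HasDerivAt (compositeCDF m α R₂ R) (φB x) x) :
    (∫ g₁ in Set.Ioi (0 : ℝ), ∫ r₁ in R₁..R₂, ∫ g₂ in Set.Ioi (0 : ℝ), ∫ r₂ in R₂..R,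
        if (ξ₂ * (g₂ ^ 2 * r₂ ^ (-(2 * α))) ≤ ξ₁ * (g₁ ^ 2 * r₁ ^ (-(2 * α))) ∧
              γ * (PT * ξ₂ * (g₂ ^ 2 * r₂ ^ (-(2 * α))) + Noise) ≤
                PT * ξ₁ * (g₁ ^ 2 * r₁ ^ (-(2 * α))) ∧
              γ * Noise ≤ PT * ξ₂ * (g₂ ^ 2 * r₂ ^ (-(2 * α)))) ∨
            (ξ₁ * (g₁ ^ 2 * r₁ ^ (-(2 * α))) < ξ₂ * (g₂ ^ 2 * r₂ ^ (-(2 * α))) ∧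
              γ * (PT * ξ₁ * (g₁ ^ 2 * r₁ ^ (-(2 * α))) + Noise) ≤
                PT * ξ₂ * (g₂ ^ 2 * r₂ ^ (-(2 * α))) ∧
              γ * Noise ≤ PT * ξ₁ * (g₁ ^ 2 * r₁ ^ (-(2 * α))))
        then m ^ m * g₁ ^ (m - 1) * Real.exp (-m * g₁) / Real.Gamma m *
            (2 * r₁ / (R₂ ^ 2 - R₁ ^ 2)) *
            (m ^ m * g₂ ^ (m - 1) * Real.exp (-m * g₂) / Real.Gamma m *
              (2 * r₂ / (R ^ 2 - R₂ ^ 2)))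
        else 0) =
      (∫ x in Set.Ioi (Noise * γ / (PT * ξ₂)),
          (1 - compositeCDF m α R₁ R₂ (γ * κ * x + Noise * γ / (PT * ξ₁))) * φB x) +
        ∫ x in Set.Ioi (Noise * γ / (PT * ξ₁)),
          (1 - compositeCDF m α R₂ R (γ * x / κ + Noise * γ / (PT * ξ₂))) * φA x := by
  classical
  have hξ1 : 0 < ξ₁ := lt_of_lt_of_le hξ2 hξ21
  have hγ0 : 0 < γ := lt_of_lt_of_le one_pos hγ
  have h02 : 0 < R₂ := h0.trans h12
  set t2 := Noise * γ / (PT * ξ₂) with ht2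
  set c1 := Noise * γ / (PT * ξ₁) with hc1
  have ht2pos : 0 < t2 := by rw [ht2]; positivity
  have hc1pos : 0 < c1 := by rw [hc1]; positivity
  have hκpos : 0 < κ := by rw [hκ]; positivity
  have hκξ : κ * ξ₁ = ξ₂ := by rw [hκ]; field_simp
  haveI hPA : IsProbabilityMeasure (ρ m α R₁ R₂) := probρ hm h0 h12
  haveI hPB : IsProbabilityMeasure (ρ m α R₂ R) := probρ hm h02 h2R
  set FA := compositeCDF m α R₁ R₂ with hFA
  set FB := compositeCDF m α R₂ R with hFB
  -- indicator functions
  set I0 : ℝ → ℝ → ℝ := fun x y =>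
    if ((ξ₂ * y ≤ ξ₁ * x ∧ γ * (PT * ξ₂ * y + Noise) ≤ PT * ξ₁ * x ∧
          γ * Noise ≤ PT * ξ₂ * y) ∨
        (ξ₁ * x < ξ₂ * y ∧ γ * (PT * ξ₁ * x + Noise) ≤ PT * ξ₂ * y ∧
          γ * Noise ≤ PT * ξ₁ * x))
    then (1:ℝ) else 0 with hI0def
  set I1 : ℝ → ℝ → ℝ := fun x y => if t2 ≤ y ∧ γ * κ * y + c1 ≤ x then (1:ℝ) else 0
    with hI1def
  set I2 : ℝ → ℝ → ℝ := fun x y => if c1 ≤ x ∧ γ * x / κ + t2 ≤ y then (1:ℝ) else 0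
    with hI2def
  -- measurability of the indicator kernels
  have hS0 : MeasurableSet {p : ℝ × ℝ |
      (ξ₂ * p.2 ≤ ξ₁ * p.1 ∧ γ * (PT * ξ₂ * p.2 + Noise) ≤ PT * ξ₁ * p.1 ∧
        γ * Noise ≤ PT * ξ₂ * p.2) ∨
      (ξ₁ * p.1 < ξ₂ * p.2 ∧ γ * (PT * ξ₁ * p.1 + Noise) ≤ PT * ξ₂ * p.2 ∧
        γ * Noise ≤ PT * ξ₁ * p.1)} := by
    apply MeasurableSet.union
    · refine MeasurableSet.inter ?_ (MeasurableSet.inter ?_ ?_)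
      · exact measurableSet_le (measurable_snd.const_mul ξ₂) (measurable_fst.const_mul ξ₁)
      · exact measurableSet_le
          (((measurable_snd.const_mul (PT * ξ₂)).add_const Noise).const_mul γ)
          (measurable_fst.const_mul (PT * ξ₁))
      · exact measurableSet_le measurable_const (measurable_snd.const_mul (PT * ξ₂))
    · refine MeasurableSet.inter ?_ (MeasurableSet.inter ?_ ?_)
      · exact measurableSet_lt (measurable_fst.const_mul ξ₁) (measurable_snd.const_mul ξ₂)
      · exact measurableSet_le
          (((measurable_fst.const_mul (PT * ξ₁)).add_const Noise).const_mul γ)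
          (measurable_snd.const_mul (PT * ξ₂))
      · exact measurableSet_le measurable_const (measurable_fst.const_mul (PT * ξ₁))
  have hI0meas : Measurable (Function.uncurry I0) := by
    have he : Function.uncurry I0 = fun p : ℝ × ℝ => if p ∈ {p : ℝ × ℝ |
      (ξ₂ * p.2 ≤ ξ₁ * p.1 ∧ γ * (PT * ξ₂ * p.2 + Noise) ≤ PT * ξ₁ * p.1 ∧
        γ * Noise ≤ PT * ξ₂ * p.2) ∨
      (ξ₁ * p.1 < ξ₂ * p.2 ∧ γ * (PT * ξ₁ * p.1 + Noise) ≤ PT * ξ₂ * p.2 ∧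
        γ * Noise ≤ PT * ξ₁ * p.1)} then (1:ℝ) else 0 :=
      funext fun p => if_congr Iff.rfl rfl rfl
    rw [he]
    exact Measurable.ite hS0 measurable_const measurable_const
  have hI1meas : Measurable (Function.uncurry I1) := by
    have hS1 : MeasurableSet {p : ℝ × ℝ | t2 ≤ p.2 ∧ γ * κ * p.2 + c1 ≤ p.1} :=
      (measurableSet_le measurable_const measurable_snd).inter
        (measurableSet_le ((measurable_snd.const_mul (γ * κ)).add_const c1) measurable_fst)
    have he : Function.uncurry I1 = fun p : ℝ × ℝ => if p ∈ {p : ℝ × ℝ |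
        t2 ≤ p.2 ∧ γ * κ * p.2 + c1 ≤ p.1} then (1:ℝ) else 0 :=
      funext fun p => if_congr Iff.rfl rfl rfl
    rw [he]
    exact Measurable.ite hS1 measurable_const measurable_const
  have hI2meas : Measurable (Function.uncurry I2) := by
    have hS2 : MeasurableSet {p : ℝ × ℝ | c1 ≤ p.1 ∧ γ * p.1 / κ + t2 ≤ p.2} :=
      (measurableSet_le measurable_const measurable_fst).inter
        (measurableSet_le (((measurable_fst.const_mul γ).div_const κ).add_const t2)
          measurable_snd)
    have he : Function.uncurry I2 = fun p : ℝ × ℝ => if p ∈ {p : ℝ × ℝ |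
        c1 ≤ p.1 ∧ γ * p.1 / κ + t2 ≤ p.2} then (1:ℝ) else 0 :=
      funext fun p => if_congr Iff.rfl rfl rfl
    rw [he]
    exact Measurable.ite hS2 measurable_const measurable_const
  have hI0bd : ∀ x y, |I0 x y| ≤ 1 := fun x y => by
    exact abs_ite_le_one _
  have hI1bd : ∀ x y, |I1 x y| ≤ 1 := fun x y => by
    exact abs_ite_le_one _
  have hI2bd : ∀ x y, |I2 x y| ≤ 1 := fun x y => by
    exact abs_ite_le_one _
  -- key algebraic equivalences
  have hA2 : ∀ y : ℝ, (γ * Noise ≤ PT * ξ₂ * y ↔ t2 ≤ y) := by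
    intro y
    rw [ht2, div_le_iff₀ (by positivity)]
    constructor <;> intro h <;> nlinarith
  have hA1 : ∀ x : ℝ, (γ * Noise ≤ PT * ξ₁ * x ↔ c1 ≤ x) := by
    intro x
    rw [hc1, div_le_iff₀ (by positivity)]
    constructor <;> intro h <;> nlinarith
  have hB1 : ∀ x y : ℝ,
      (γ * (PT * ξ₂ * y + Noise) ≤ PT * ξ₁ * x ↔ γ * κ * y + c1 ≤ x) := by
    intro x y
    have hden : (0:ℝ) < PT * ξ₁ := by positivity
    have key : x - (γ * κ * y + c1)
        = (PT * ξ₁ * x - γ * (PT * ξ₂ * y + Noise)) / (PT * ξ₁) := by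
      rw [hc1, hκ]
      field_simp
    constructor <;> intro h
    · have h2 : 0 ≤ (PT * ξ₁ * x - γ * (PT * ξ₂ * y + Noise)) / (PT * ξ₁) :=
        div_nonneg (by linarith) hden.le
      rw [← key] at h2
      linarith
    · have h2 : 0 ≤ (PT * ξ₁ * x - γ * (PT * ξ₂ * y + Noise)) / (PT * ξ₁) := by
        rw [← key]; linarith
      have h3 := mul_nonneg h2 hden.le
      rw [div_mul_cancel₀ _ hden.ne'] at h3
      linarith
  have hB2 : ∀ x y : ℝ,
      (γ * (PT * ξ₁ * x + Noise) ≤ PT * ξ₂ * y ↔ γ * x / κ + t2 ≤ y) := by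
    intro x y
    have hden : (0:ℝ) < PT * ξ₂ := by positivity
    have key : y - (γ * x / κ + t2)
        = (PT * ξ₂ * y - γ * (PT * ξ₁ * x + Noise)) / (PT * ξ₂) := by
      rw [ht2, hκ]
      field_simp
    constructor <;> intro h
    · have h2 : 0 ≤ (PT * ξ₂ * y - γ * (PT * ξ₁ * x + Noise)) / (PT * ξ₂) :=
        div_nonneg (by linarith) hden.le
      rw [← key] at h2
      linarith
    · have h2 : 0 ≤ (PT * ξ₂ * y - γ * (PT * ξ₁ * x + Noise)) / (PT * ξ₂) := by
        rw [← key]; linarith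
      have h3 := mul_nonneg h2 hden.le
      rw [div_mul_cancel₀ _ hden.ne'] at h3
      linarith
  have himp1 : ∀ x y : ℝ, 0 ≤ y → γ * κ * y + c1 ≤ x → ξ₂ * y ≤ ξ₁ * x := by
    intro x y hy h
    have h1 : ξ₁ * (γ * κ * y + c1) ≤ ξ₁ * x := mul_le_mul_of_nonneg_left h hξ1.le
    have h2 : ξ₁ * (γ * κ * y) = γ * ξ₂ * y := by rw [← hκξ]; ring
    have h3 : 0 ≤ (γ - 1) * ξ₂ * y :=
      mul_nonneg (mul_nonneg (sub_nonneg.mpr hγ) hξ2.le) hy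
    nlinarith [mul_pos hξ1 hc1pos]
  have himp2 : ∀ x y : ℝ, 0 ≤ x → γ * x / κ + t2 ≤ y → ξ₁ * x < ξ₂ * y := by
    intro x y hx h
    have h1 : ξ₂ * (γ * x / κ + t2) ≤ ξ₂ * y := mul_le_mul_of_nonneg_left h hξ2.le
    have h2 : ξ₂ * (γ * x / κ) = γ * ξ₁ * x := by
      rw [hκ]
      field_simp
    have h3 : 0 ≤ (γ - 1) * ξ₁ * x :=
      mul_nonneg (mul_nonneg (sub_nonneg.mpr hγ) hξ1.le) hx
    nlinarith [mul_pos hξ2 ht2pos]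
  have hiff : ∀ x y : ℝ, 0 ≤ x → 0 ≤ y →
      (((ξ₂ * y ≤ ξ₁ * x ∧ γ * (PT * ξ₂ * y + Noise) ≤ PT * ξ₁ * x ∧
          γ * Noise ≤ PT * ξ₂ * y) ∨
        (ξ₁ * x < ξ₂ * y ∧ γ * (PT * ξ₁ * x + Noise) ≤ PT * ξ₂ * y ∧
          γ * Noise ≤ PT * ξ₁ * x))
        ↔ ((t2 ≤ y ∧ γ * κ * y + c1 ≤ x) ∨ (c1 ≤ x ∧ γ * x / κ + t2 ≤ y))) := by
    intro x y hx hy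
    constructor
    · rintro (⟨-, h2, h3⟩ | ⟨-, h2, h3⟩)
      · exact Or.inl ⟨(hA2 y).mp h3, (hB1 x y).mp h2⟩
      · exact Or.inr ⟨(hA1 x).mp h3, (hB2 x y).mp h2⟩
    · rintro (⟨h1, h2⟩ | ⟨h1, h2⟩)
      · exact Or.inl ⟨himp1 x y hy h2, (hB1 x y).mpr h2, (hA2 y).mpr h1⟩
      · exact Or.inr ⟨himp2 x y hx h2, (hB2 x y).mpr h2, (hA1 x).mpr h1⟩
  have hdisj : ∀ x y : ℝ, 0 ≤ x → 0 ≤ y →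
      ¬((t2 ≤ y ∧ γ * κ * y + c1 ≤ x) ∧ (c1 ≤ x ∧ γ * x / κ + t2 ≤ y)) := by
    rintro x y hx hy ⟨⟨-, ha⟩, ⟨-, hb⟩⟩
    have h1 := himp1 x y hy ha
    have h2 := himp2 x y hx hb
    linarith
  have hptwise : ∀ x y : ℝ, 0 ≤ x → 0 ≤ y → I0 x y = I1 x y + I2 x y := by
    intro x y hx hy
    by_cases h1 : t2 ≤ y ∧ γ * κ * y + c1 ≤ x
    · have h2 : ¬(c1 ≤ x ∧ γ * x / κ + t2 ≤ y) := fun h2 => hdisj x y hx hy ⟨h1, h2⟩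
      rw [show I0 x y = 1 from if_pos ((hiff x y hx hy).mpr (Or.inl h1)),
        show I1 x y = 1 from if_pos h1, show I2 x y = 0 from if_neg h2]
      norm_num
    · by_cases h2 : c1 ≤ x ∧ γ * x / κ + t2 ≤ y
      · rw [show I0 x y = 1 from if_pos ((hiff x y hx hy).mpr (Or.inr h2)),
          show I1 x y = 0 from if_neg h1, show I2 x y = 1 from if_pos h2]
        norm_num
      · rw [show I0 x y = 0 from if_neg (fun hc => ((hiff x y hx hy).mp hc).elim h1 h2),
          show I1 x y = 0 from if_neg h1, show I2 x y = 0 from if_neg h2]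
        norm_num
  -- the inner-kernel function
  set W : ℝ → ℝ := fun x => ∫ y, I0 x y ∂(ρ m α R₂ R) with hWdef
  have hWmeas : Measurable W := by
    rw [hWdef]
    exact (hI0meas.stronglyMeasurable.integral_prod_right).measurable
  have hWbd : ∀ x, |W x| ≤ 1 := fun x => norm_integral_le_one (fun y => hI0bd x y)
  -- Step A+B : LHS as an integral against ρA
  have hLHS : (∫ g₁ in Set.Ioi (0 : ℝ), ∫ r₁ in R₁..R₂, ∫ g₂ in Set.Ioi (0 : ℝ),
      ∫ r₂ in R₂..R,
        if (ξ₂ * (g₂ ^ 2 * r₂ ^ (-(2 * α))) ≤ ξ₁ * (g₁ ^ 2 * r₁ ^ (-(2 * α))) ∧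
              γ * (PT * ξ₂ * (g₂ ^ 2 * r₂ ^ (-(2 * α))) + Noise) ≤
                PT * ξ₁ * (g₁ ^ 2 * r₁ ^ (-(2 * α))) ∧
              γ * Noise ≤ PT * ξ₂ * (g₂ ^ 2 * r₂ ^ (-(2 * α)))) ∨
            (ξ₁ * (g₁ ^ 2 * r₁ ^ (-(2 * α))) < ξ₂ * (g₂ ^ 2 * r₂ ^ (-(2 * α))) ∧
              γ * (PT * ξ₁ * (g₁ ^ 2 * r₁ ^ (-(2 * α))) + Noise) ≤
                PT * ξ₂ * (g₂ ^ 2 * r₂ ^ (-(2 * α))) ∧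
              γ * Noise ≤ PT * ξ₁ * (g₁ ^ 2 * r₁ ^ (-(2 * α))))
        then m ^ m * g₁ ^ (m - 1) * Real.exp (-m * g₁) / Real.Gamma m *
            (2 * r₁ / (R₂ ^ 2 - R₁ ^ 2)) *
            (m ^ m * g₂ ^ (m - 1) * Real.exp (-m * g₂) / Real.Gamma m *
              (2 * r₂ / (R ^ 2 - R₂ ^ 2)))
        else 0)
      = ∫ x, W x ∂(ρ m α R₁ R₂) := by
    have inner : ∀ g₁ r₁ : ℝ,
        (∫ g₂ in Set.Ioi (0 : ℝ), ∫ r₂ in R₂..R,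
          if (ξ₂ * (g₂ ^ 2 * r₂ ^ (-(2 * α))) ≤ ξ₁ * (g₁ ^ 2 * r₁ ^ (-(2 * α))) ∧
                γ * (PT * ξ₂ * (g₂ ^ 2 * r₂ ^ (-(2 * α))) + Noise) ≤
                  PT * ξ₁ * (g₁ ^ 2 * r₁ ^ (-(2 * α))) ∧
                γ * Noise ≤ PT * ξ₂ * (g₂ ^ 2 * r₂ ^ (-(2 * α)))) ∨
              (ξ₁ * (g₁ ^ 2 * r₁ ^ (-(2 * α))) < ξ₂ * (g₂ ^ 2 * r₂ ^ (-(2 * α))) ∧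
                γ * (PT * ξ₁ * (g₁ ^ 2 * r₁ ^ (-(2 * α))) + Noise) ≤
                  PT * ξ₂ * (g₂ ^ 2 * r₂ ^ (-(2 * α))) ∧
                γ * Noise ≤ PT * ξ₁ * (g₁ ^ 2 * r₁ ^ (-(2 * α))))
          then m ^ m * g₁ ^ (m - 1) * Real.exp (-m * g₁) / Real.Gamma m *
              (2 * r₁ / (R₂ ^ 2 - R₁ ^ 2)) *
              (m ^ m * g₂ ^ (m - 1) * Real.exp (-m * g₂) / Real.Gamma m *
                (2 * r₂ / (R ^ 2 - R₂ ^ 2)))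
          else 0)
        = gam m g₁ * rad R₁ R₂ r₁ * W (Xv α (g₁, r₁)) := by
      intro g₁ r₁
      have hker : Measurable (Function.uncurry fun g r : ℝ =>
          I0 (Xv α (g₁, r₁)) (Xv α (g, r))) :=
        (hI0meas.of_uncurry_left).comp (measurable_Xv α)
      calc (∫ g₂ in Set.Ioi (0 : ℝ), ∫ r₂ in R₂..R,
          if (ξ₂ * (g₂ ^ 2 * r₂ ^ (-(2 * α))) ≤ ξ₁ * (g₁ ^ 2 * r₁ ^ (-(2 * α))) ∧
                γ * (PT * ξ₂ * (g₂ ^ 2 * r₂ ^ (-(2 * α))) + Noise) ≤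
                  PT * ξ₁ * (g₁ ^ 2 * r₁ ^ (-(2 * α))) ∧
                γ * Noise ≤ PT * ξ₂ * (g₂ ^ 2 * r₂ ^ (-(2 * α)))) ∨
              (ξ₁ * (g₁ ^ 2 * r₁ ^ (-(2 * α))) < ξ₂ * (g₂ ^ 2 * r₂ ^ (-(2 * α))) ∧
                γ * (PT * ξ₁ * (g₁ ^ 2 * r₁ ^ (-(2 * α))) + Noise) ≤
                  PT * ξ₂ * (g₂ ^ 2 * r₂ ^ (-(2 * α))) ∧
                γ * Noise ≤ PT * ξ₁ * (g₁ ^ 2 * r₁ ^ (-(2 * α))))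
          then m ^ m * g₁ ^ (m - 1) * Real.exp (-m * g₁) / Real.Gamma m *
              (2 * r₁ / (R₂ ^ 2 - R₁ ^ 2)) *
              (m ^ m * g₂ ^ (m - 1) * Real.exp (-m * g₂) / Real.Gamma m *
                (2 * r₂ / (R ^ 2 - R₂ ^ 2)))
          else 0)
          = ∫ g₂ in Set.Ioi (0 : ℝ), ∫ r₂ in R₂..R,
              gam m g₁ * rad R₁ R₂ r₁ *
                (gam m g₂ * rad R₂ R r₂ *
                  I0 (Xv α (g₁, r₁)) (Xv α (g₂, r₂))) := by
            refine setIntegral_congr_fun measurableSet_Ioi fun g₂ _ => ?_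
            refine intervalIntegral.integral_congr fun r₂ _ => ?_
            by_cases h : (ξ₂ * (g₂ ^ 2 * r₂ ^ (-(2 * α))) ≤
                  ξ₁ * (g₁ ^ 2 * r₁ ^ (-(2 * α))) ∧
                γ * (PT * ξ₂ * (g₂ ^ 2 * r₂ ^ (-(2 * α))) + Noise) ≤
                  PT * ξ₁ * (g₁ ^ 2 * r₁ ^ (-(2 * α))) ∧
                γ * Noise ≤ PT * ξ₂ * (g₂ ^ 2 * r₂ ^ (-(2 * α)))) ∨
              (ξ₁ * (g₁ ^ 2 * r₁ ^ (-(2 * α))) < ξ₂ * (g₂ ^ 2 * r₂ ^ (-(2 * α))) ∧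
                γ * (PT * ξ₁ * (g₁ ^ 2 * r₁ ^ (-(2 * α))) + Noise) ≤
                  PT * ξ₂ * (g₂ ^ 2 * r₂ ^ (-(2 * α))) ∧
                γ * Noise ≤ PT * ξ₁ * (g₁ ^ 2 * r₁ ^ (-(2 * α))))
            · rw [if_pos h, show I0 (Xv α (g₁, r₁)) (Xv α (g₂, r₂)) = 1 from if_pos h,
                mul_one]
              rfl
            · rw [if_neg h, show I0 (Xv α (g₁, r₁)) (Xv α (g₂, r₂)) = 0 from if_neg h,
                mul_zero, mul_zero]
        _ = ∫ g₂ in Set.Ioi (0 : ℝ), gam m g₁ * rad R₁ R₂ r₁ *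
              ∫ r₂ in R₂..R, gam m g₂ * rad R₂ R r₂ *
                I0 (Xv α (g₁, r₁)) (Xv α (g₂, r₂)) :=
            setIntegral_congr_fun measurableSet_Ioi fun g₂ _ =>
              intervalIntegral.integral_const_mul _ _
        _ = gam m g₁ * rad R₁ R₂ r₁ * ∫ g₂ in Set.Ioi (0 : ℝ),
              ∫ r₂ in R₂..R, gam m g₂ * rad R₂ R r₂ *
                I0 (Xv α (g₁, r₁)) (Xv α (g₂, r₂)) := integral_const_mul _ _
        _ = gam m g₁ * rad R₁ R₂ r₁ * W (Xv α (g₁, r₁)) := by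
            rw [box_integral hm h02 h2R
              (fun g r : ℝ => I0 (Xv α (g₁, r₁)) (Xv α (g, r))) hker 1
              (fun g r => hI0bd _ _), hWdef]
            congr 1
            rw [ρ]
            exact (integral_map (measurable_Xv α).aemeasurable
              ((hI0meas.of_uncurry_left).aestronglyMeasurable)).symm
    have hWker : Measurable (Function.uncurry fun g r : ℝ => W (Xv α (g, r))) :=
      hWmeas.comp (measurable_Xv α)
    calc _ = ∫ g₁ in Set.Ioi (0:ℝ), ∫ r₁ in R₁..R₂,
          gam m g₁ * rad R₁ R₂ r₁ * W (Xv α (g₁, r₁)) := by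
          refine setIntegral_congr_fun measurableSet_Ioi fun g₁ _ => ?_
          exact intervalIntegral.integral_congr fun r₁ _ => inner g₁ r₁
      _ = ∫ p, W (Xv α (p.1, p.2)) ∂(ω m R₁ R₂) :=
          box_integral hm h0 h12 _ hWker 1 (fun g r => hWbd _)
      _ = ∫ x, W x ∂(ρ m α R₁ R₂) := by
          rw [ρ]
          exact (integral_map (measurable_Xv α).aemeasurable
            hWmeas.aestronglyMeasurable).symm
  rw [hLHS]
  -- a.e. positivity under the pushforward measures
  have haeA : ∀ᵐ x ∂(ρ m α R₁ R₂), 0 < x := by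
    rw [ae_iff]
    refine measure_mono_null (fun x hx => ?_) (rho_Iic_zero hm hα h0 h12)
    simpa using hx
  have haeB : ∀ᵐ y ∂(ρ m α R₂ R), 0 < y := by
    rw [ae_iff]
    refine measure_mono_null (fun x hx => ?_) (rho_Iic_zero hm hα h02 h2R)
    simpa using hx
  set V1 : ℝ → ℝ := fun x => ∫ y, I1 x y ∂(ρ m α R₂ R) with hV1def
  set V2 : ℝ → ℝ := fun x => ∫ y, I2 x y ∂(ρ m α R₂ R) with hV2def
  have hV1meas : Measurable V1 := by
    rw [hV1def]
    exact (hI1meas.stronglyMeasurable.integral_prod_right).measurable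
  have hV2meas : Measurable V2 := by
    rw [hV2def]
    exact (hI2meas.stronglyMeasurable.integral_prod_right).measurable
  have hV1bd : ∀ x, |V1 x| ≤ 1 := fun x => norm_integral_le_one (fun y => hI1bd x y)
  have hV2bd : ∀ x, |V2 x| ≤ 1 := fun x => norm_integral_le_one (fun y => hI2bd x y)
  have hWsplit : ∀ x : ℝ, 0 < x → W x = V1 x + V2 x := by
    intro x hx
    rw [hWdef, hV1def, hV2def]
    dsimp only
    rw [← integral_add
      (integrable_of_bdd_one (hI1meas.of_uncurry_left) (fun y => hI1bd x y))
      (integrable_of_bdd_one (hI2meas.of_uncurry_left) (fun y => hI2bd x y))]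
    refine integral_congr_ae ?_
    filter_upwards [haeB] with y hy
    exact hptwise x y hx.le hy.le
  have hsplit : (∫ x, W x ∂(ρ m α R₁ R₂))
      = (∫ x, V1 x ∂(ρ m α R₁ R₂)) + ∫ x, V2 x ∂(ρ m α R₁ R₂) := by
    rw [← integral_add (integrable_of_bdd_one hV1meas hV1bd)
      (integrable_of_bdd_one hV2meas hV2bd)]
    refine integral_congr_ae ?_
    filter_upwards [haeA] with x hx using hWsplit x hx
  rw [hsplit]
  -- density representations
  have hρAeq : ρ m α R₁ R₂ = volume.withDensity
      (fun x => ENNReal.ofReal ((Ioi (0:ℝ)).indicator (deriv FA) x)) :=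
    measure_eq_withDensity _ FA (fun c => cdf_eq hm h0 h12 c)
      (rho_Iic_zero hm hα h0 h12) φA hφA
  have hρBeq : ρ m α R₂ R = volume.withDensity
      (fun x => ENNReal.ofReal ((Ioi (0:ℝ)).indicator (deriv FB) x)) :=
    measure_eq_withDensity _ FB (fun c => cdf_eq hm h02 h2R c)
      (rho_Iic_zero hm hα h02 h2R) φB hφB
  have hmonoFA : Monotone FA := fun a b hab => by
    rw [show FA a = _ from cdf_eq hm h0 h12 a, show FA b = _ from cdf_eq hm h0 h12 b]
    exact ENNReal.toReal_mono (measure_ne_top _ _) (measure_mono (Iio_subset_Iio hab))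
  have hmonoFB : Monotone FB := fun a b hab => by
    rw [show FB a = _ from cdf_eq hm h02 h2R a, show FB b = _ from cdf_eq hm h02 h2R b]
    exact ENNReal.toReal_mono (measure_ne_top _ _) (measure_mono (Iio_subset_Iio hab))
  have hdAnn : ∀ x, 0 ≤ (Ioi (0:ℝ)).indicator (deriv FA) x := fun x => by
    by_cases hx : x ∈ Ioi (0:ℝ)
    · rw [indicator_of_mem hx, (hφA x hx).deriv]
      exact nonneg_of_monotone_hasDerivAt hmonoFA (hφA x hx)
    · rw [indicator_of_notMem hx]
  have hdBnn : ∀ x, 0 ≤ (Ioi (0:ℝ)).indicator (deriv FB) x := fun x => by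
    by_cases hx : x ∈ Ioi (0:ℝ)
    · rw [indicator_of_mem hx, (hφB x hx).deriv]
      exact nonneg_of_monotone_hasDerivAt hmonoFB (hφB x hx)
    · rw [indicator_of_notMem hx]
  have hdAmeas : Measurable fun x => (Ioi (0:ℝ)).indicator (deriv FA) x :=
    (measurable_deriv _).indicator measurableSet_Ioi
  have hdBmeas : Measurable fun x => (Ioi (0:ℝ)).indicator (deriv FB) x :=
    (measurable_deriv _).indicator measurableSet_Ioi
  have htailA : ∀ c : ℝ, (ρ m α R₁ R₂ (Ici c)).toReal = 1 - FA c :=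
    fun c => tail_eq hm h0 h12 c
  have htailB : ∀ c : ℝ, (ρ m α R₂ R (Ici c)).toReal = 1 - FB c :=
    fun c => tail_eq hm h02 h2R c
  -- evaluation of the inner integrals
  have hV2eval : ∀ x : ℝ, V2 x = if c1 ≤ x then 1 - FB (γ * x / κ + t2) else 0 := by
    intro x
    rw [hV2def]
    dsimp only
    by_cases hx : c1 ≤ x
    · rw [if_pos hx, ← htailB (γ * x / κ + t2),
        ← integral_ite_Ici (μ := ρ m α R₂ R) (γ * x / κ + t2)]
      refine integral_congr_ae (ae_of_all _ fun y => ?_)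
      show I2 x y = if γ * x / κ + t2 ≤ y then (1:ℝ) else 0
      by_cases hy : γ * x / κ + t2 ≤ y
      · rw [if_pos hy]
        exact if_pos ⟨hx, hy⟩
      · rw [if_neg hy]
        exact if_neg fun hc => hy hc.2
    · rw [if_neg hx]
      have hz : (∫ y, I2 x y ∂(ρ m α R₂ R)) = ∫ _, (0:ℝ) ∂(ρ m α R₂ R) :=
        integral_congr_ae (ae_of_all _ fun y => if_neg fun hc => hx hc.1)
      rw [hz, integral_zero]
  have hU1eval : ∀ y : ℝ, (∫ x, I1 x y ∂(ρ m α R₁ R₂))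
      = if t2 ≤ y then 1 - FA (γ * κ * y + c1) else 0 := by
    intro y
    by_cases hy : t2 ≤ y
    · rw [if_pos hy, ← htailA (γ * κ * y + c1),
        ← integral_ite_Ici (μ := ρ m α R₁ R₂) (γ * κ * y + c1)]
      refine integral_congr_ae (ae_of_all _ fun x => ?_)
      show I1 x y = if γ * κ * y + c1 ≤ x then (1:ℝ) else 0
      by_cases hx : γ * κ * y + c1 ≤ x
      · rw [if_pos hx]
        exact if_pos ⟨hy, hx⟩
      · rw [if_neg hx]
        exact if_neg fun hc => hx hc.2
    · rw [if_neg hy]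
      have hz : (∫ x, I1 x y ∂(ρ m α R₁ R₂)) = ∫ _, (0:ℝ) ∂(ρ m α R₁ R₂) :=
        integral_congr_ae (ae_of_all _ fun x => if_neg fun hc => hy hc.1)
      rw [hz, integral_zero]
  -- the second term
  have hInt2 : (∫ x, V2 x ∂(ρ m α R₁ R₂))
      = ∫ x in Ioi c1, (1 - FB (γ * x / κ + t2)) * φA x := by
    rw [hρAeq, integral_withDensity_ofReal hdAmeas hdAnn]
    have hae : (fun x => (Ioi (0:ℝ)).indicator (deriv FA) x * V2 x)
        =ᵐ[volume] (Ioi c1).indicator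
          (fun x => (1 - FB (γ * x / κ + t2)) * φA x) := by
      rw [Filter.EventuallyEq, ae_iff]
      refine measure_mono_null (fun x hx => ?_) (measure_singleton c1)
      simp only [mem_setOf_eq] at hx
      by_contra hne
      apply hx
      have hxc : x ≠ c1 := by simpa using hne
      rcases lt_or_gt_of_ne hxc with hlt | hgt
      · rw [hV2eval x, if_neg (not_le.mpr hlt), mul_zero,
          indicator_of_notMem (by simp only [mem_Ioi, not_lt]; linarith : x ∉ Ioi c1)]
      · have hx0 : 0 < x := hc1pos.trans hgt
        rw [indicator_of_mem (mem_Ioi.mpr hx0), (hφA x hx0).deriv, hV2eval x,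
          if_pos hgt.le, indicator_of_mem (mem_Ioi.mpr hgt)]
        exact mul_comm _ _
    rw [integral_congr_ae hae, integral_indicator measurableSet_Ioi]
  -- the first term
  have hIprod : Integrable (Function.uncurry I1)
      ((ρ m α R₁ R₂).prod (ρ m α R₂ R)) := by
    refine Integrable.mono' (integrable_const 1) hI1meas.aestronglyMeasurable ?_
    refine ae_of_all _ fun p => ?_
    simp only [Function.uncurry_apply_pair, Real.norm_eq_abs]
    exact hI1bd p.1 p.2
  have hInt1 : (∫ x, V1 x ∂(ρ m α R₁ R₂))
      = ∫ y in Ioi t2, (1 - FA (γ * κ * y + c1)) * φB y := by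
    have hswap : (∫ x, V1 x ∂(ρ m α R₁ R₂))
        = ∫ y, (∫ x, I1 x y ∂(ρ m α R₁ R₂)) ∂(ρ m α R₂ R) := by
      rw [hV1def]
      exact integral_integral_swap hIprod
    rw [hswap]
    have hcongr : (∫ y, (∫ x, I1 x y ∂(ρ m α R₁ R₂)) ∂(ρ m α R₂ R))
        = ∫ y, (if t2 ≤ y then 1 - FA (γ * κ * y + c1) else 0) ∂(ρ m α R₂ R) :=
      integral_congr_ae (ae_of_all _ fun y => hU1eval y)
    rw [hcongr, hρBeq, integral_withDensity_ofReal hdBmeas hdBnn]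
    have hae : (fun y => (Ioi (0:ℝ)).indicator (deriv FB) y *
          (if t2 ≤ y then 1 - FA (γ * κ * y + c1) else 0))
        =ᵐ[volume] (Ioi t2).indicator
          (fun y => (1 - FA (γ * κ * y + c1)) * φB y) := by
      rw [Filter.EventuallyEq, ae_iff]
      refine measure_mono_null (fun y hy => ?_) (measure_singleton t2)
      simp only [mem_setOf_eq] at hy
      by_contra hne
      apply hy
      have hyc : y ≠ t2 := by simpa using hne
      rcases lt_or_gt_of_ne hyc with hlt | hgt
      · rw [if_neg (not_le.mpr hlt), mul_zero,
          indicator_of_notMem (by simp only [mem_Ioi, not_lt]; linarith : y ∉ Ioi t2)]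
      · have hy0 : 0 < y := ht2pos.trans hgt
        rw [indicator_of_mem (mem_Ioi.mpr hy0), (hφB y hy0).deriv,
          if_pos hgt.le, indicator_of_mem (mem_Ioi.mpr hgt)]
        exact mul_comm _ _
    rw [integral_congr_ae hae, integral_indicator measurableSet_Ioi]
  rw [hInt1, hInt2]
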